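/- arXiv:2605.07117 — 2 statements merged into one kernel-verified Lean document; each statement's English description precedes it below -/
import Mathlib

section
/- Let Δ > 0 and σ₀ > 0, let δ ∈ (0,1), and set ε = (1/σ₀)·√(2·ln(1.25/δ)); assume ε < 1. Let μ, μ' ∈ ℝ with |μ − μ'| ≤ Δ and set σ² = σ₀²·Δ². Then for every measurable set A ⊆ ℝ, gaussianReal(μ, σ²)(A) ≤ e^ε · gaussianReal(μ', σ²)(A) + δ. That is, the one-dimensional Gaussian mechanism with sensitivity Δ and noise standard deviation σ₀·Δ is (ε,δ)-differentially private. -/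
/-!
Let `B = {x | e^ε p_{μ'}(x) < p_μ(x)}` be the set where the privacy loss exceeds `ε`. Off `B` the
density of `N(μ, σ²)` is at most `e^ε` times that of `N(μ', σ²)`, so
`P_μ(A) ≤ e^ε P_{μ'}(A) + P_μ(B)`. For two Gaussians `B` is a half-line, and `P_μ(B)` is the
standard normal tail beyond `σε/|μ - μ'| - |μ - μ'|/(2σ)`, which is largest when `|μ - μ'| = Δ`,
i.e. beyond `t = c - 1/(2σ₀)` where `c = σ₀ε = √(2 log(1.25/δ))`, so that `δ = 1.25 e^{-c²/2}`.
If `t ≥ 0`, then `P(Z > t) ≤ e^{-t²/2}/2` and `c² - t² ≤ ε < 1` give `P(Z > t) ≤ (√e / 2.5) δ ≤ δ`.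
If `t < 0`, then `c² < ε/2 < 1/2` forces `δ ≥ 15/16`, while `P(Z > t) ≤ 1/2 + |t|/√(2π) ≤ 15/16`.
-/

open MeasureTheory ProbabilityTheory Real Set
open scoped NNReal ENNReal

theorem withDensity_apply_le_mul_add {α : Type*} [MeasurableSpace α] {m : Measure α} [SFinite m]
    {f g : α → ℝ≥0∞} (hg : Measurable g) (c : ℝ≥0∞) (A : Set α) :
    m.withDensity f A ≤ c * m.withDensity g A + m.withDensity f {x | c * g x < f x} := by
  set B := {x | c * g x < f x}
  calc m.withDensity f A ≤ m.withDensity f (A \ B) + m.withDensity f B :=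
        (measure_mono (subset_sdiff_union A B)).trans (measure_union_le _ _)
    _ ≤ c * m.withDensity g (A \ B) + m.withDensity f B := by
        gcongr
        rw [withDensity_apply' _, withDensity_apply' _, ← lintegral_const_mul c hg]
        exact setLIntegral_mono (hg.const_mul c) fun x hx ↦ not_lt.1 hx.2
    _ ≤ c * m.withDensity g A + m.withDensity f B := by gcongr; exact sdiff_subset

theorem ofReal_exp_mul_gaussianPDF_lt_iff {μ μ' ε : ℝ} {v : ℝ≥0} (hv : v ≠ 0) (x : ℝ) :
    ENNReal.ofReal (exp ε) * gaussianPDF μ' v x < gaussianPDF μ v x ↔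
      v * ε - (μ - μ') ^ 2 / 2 < (μ - μ') * (x - μ) := by
  have hv' : (0 : ℝ) < v := by positivity
  rw [gaussianPDF, gaussianPDF, ← ENNReal.ofReal_mul (exp_nonneg ε),
    ENNReal.ofReal_lt_ofReal_iff (gaussianPDFReal_pos μ v x hv), gaussianPDFReal,
    gaussianPDFReal, mul_left_comm, ← exp_add, mul_lt_mul_iff_right₀ (by positivity), exp_lt_exp,
    ← sub_pos]
  have key : -(x - μ) ^ 2 / (2 * v) - (ε + -(x - μ') ^ 2 / (2 * v)) =
      ((μ - μ') * (x - μ) - (v * ε - (μ - μ') ^ 2 / 2)) / v := by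
    field_simp
    ring
  rw [key, div_pos_iff_of_pos_right hv', sub_pos]

theorem gaussianReal_setOf_lt_mul_sub (μ a : ℝ) {d : ℝ} (hd : d ≠ 0) {v : ℝ≥0} (hv : v ≠ 0) :
    gaussianReal μ v {x | a < d * (x - μ)} = gaussianReal 0 1 (Ioi (a / (|d| * √v))) := by
  have hs : 0 < |d| * √v := by positivity
  -- only `d ^ 2` enters the variance, which is why the sign of `d` plays no role
  have h1 : (gaussianReal μ v).map (fun x ↦ d * (x - μ)) =
      gaussianReal 0 (.mk (d ^ 2) (sq_nonneg _) * v) := by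
    rw [show (fun x ↦ d * (x - μ)) = (d * ·) ∘ (· - μ) from rfl,
      ← Measure.map_map (by fun_prop) (by fun_prop), gaussianReal_map_sub_const,
      gaussianReal_map_const_mul, sub_self, mul_zero]
  have h2 : (gaussianReal 0 1).map (|d| * √v * ·) =
      gaussianReal 0 (.mk (d ^ 2) (sq_nonneg _) * v) := by
    rw [gaussianReal_map_const_mul, mul_zero]
    congr 1
    ext
    simp [mul_pow, sq_abs]
  have hIoi : Ioi (a / (|d| * √v)) = (|d| * √v * ·) ⁻¹' Ioi a := by
    ext z
    exact div_lt_iff₀' hs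
  rw [hIoi, ← Measure.map_apply (by fun_prop) measurableSet_Ioi, h2, ← h1,
    Measure.map_apply (by fun_prop) measurableSet_Ioi]
  rfl

theorem gaussianReal_setOf_exp_mul_gaussianPDF_lt_le {μ μ' ε Δ : ℝ} {v : ℝ≥0} (hv : v ≠ 0)
    (hε : 0 ≤ ε) (hsens : |μ - μ'| ≤ Δ) :
    gaussianReal μ v {x | ENNReal.ofReal (exp ε) * gaussianPDF μ' v x < gaussianPDF μ v x} ≤
      gaussianReal 0 1 (Ioi (√v * ε / Δ - Δ / (2 * √v))) := by
  simp_rw [ofReal_exp_mul_gaussianPDF_lt_iff hv]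
  obtain hd | hd := eq_or_ne (μ - μ') 0
  · simp [hd, not_lt.2 (mul_nonneg v.coe_nonneg hε)]
  · have hd' : 0 < |μ - μ'| := abs_pos.2 hd
    rw [gaussianReal_setOf_lt_mul_sub μ _ hd hv]
    refine measure_mono (Ioi_subset_Ioi ?_)
    have hthreshold : (v * ε - (μ - μ') ^ 2 / 2) / (|μ - μ'| * √v) =
        √v * ε / |μ - μ'| - |μ - μ'| / (2 * √v) := by
      rw [← sq_abs (μ - μ')]
      nth_rw 1 [← sq_sqrt v.coe_nonneg]
      field_simp
    rw [hthreshold]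
    gcongr

theorem gaussianReal_Ioi_self (μ : ℝ) {v : ℝ≥0} (hv : v ≠ 0) : gaussianReal μ v (Ioi μ) = 2⁻¹ := by
  have := nullSingletonClass_gaussianReal (μ := μ) hv
  have hsymm : gaussianReal μ v (Iic μ) = gaussianReal μ v (Ioi μ) := by
    have hreflect := gaussianReal_map_const_sub (μ := μ) (v := v) (2 * μ)
    rw [show 2 * μ - μ = μ by ring] at hreflect
    rw [← measure_congr Iio_ae_eq_Iic]
    nth_rw 1 [← hreflect]
    rw [Measure.map_apply (by fun_prop) measurableSet_Iio]
    congr 1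
    ext x
    simp only [mem_preimage, mem_Iio, mem_Ioi]
    constructor <;> intro <;> linarith
  have hsum := measure_add_measure_compl (μ := gaussianReal μ v) (measurableSet_Ioi (a := μ))
  rw [compl_Ioi, hsymm, measure_univ, ← two_mul, mul_comm] at hsum
  exact ENNReal.eq_inv_of_mul_eq_one_left hsum

theorem gaussianReal_le_ofReal_mul_volume (μ : ℝ) {v : ℝ≥0} (hv : v ≠ 0) (s : Set ℝ) :
    gaussianReal μ v s ≤ ENNReal.ofReal (√(2 * π * v))⁻¹ * volume s := by
  rw [gaussianReal_apply μ hv, ← setLIntegral_const]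
  refine setLIntegral_mono measurable_const fun x _ ↦ ENNReal.ofReal_le_ofReal ?_
  refine mul_le_of_le_one_right (by positivity) (exp_le_one_iff.2 ?_)
  exact div_nonpos_of_nonpos_of_nonneg (neg_nonpos.2 (sq_nonneg _)) (by positivity)

theorem gaussianReal_Ioi_le_exp_neg_sq {t : ℝ} (ht : 0 ≤ t) :
    gaussianReal 0 1 (Ioi t) ≤ ENNReal.ofReal (exp (-t ^ 2 / 2) / 2) := by
  have hpdf : ∀ x ∈ Ioi t,
      gaussianPDF 0 1 x ≤ ENNReal.ofReal (exp (-t ^ 2 / 2)) * gaussianPDF t 1 x := by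
    intro x hx
    rw [gaussianPDF, gaussianPDF, ← ENNReal.ofReal_mul (exp_nonneg _), gaussianPDFReal,
      gaussianPDFReal, mul_left_comm, ← exp_add]
    refine ENNReal.ofReal_le_ofReal (mul_le_mul_of_nonneg_left (exp_le_exp.2 ?_) (by positivity))
    have : 0 ≤ t * (x - t) := mul_nonneg ht (sub_nonneg.2 hx.le)
    simp only [NNReal.coe_one]
    nlinarith
  calc gaussianReal 0 1 (Ioi t)
      ≤ ∫⁻ x in Ioi t, ENNReal.ofReal (exp (-t ^ 2 / 2)) * gaussianPDF t 1 x := by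
        rw [gaussianReal_apply 0 one_ne_zero]
        exact setLIntegral_mono (measurable_const.mul (measurable_gaussianPDF t 1)) hpdf
    _ = ENNReal.ofReal (exp (-t ^ 2 / 2)) * 2⁻¹ := by
        rw [lintegral_const_mul _ (measurable_gaussianPDF t 1),
          ← gaussianReal_apply t one_ne_zero, gaussianReal_Ioi_self t one_ne_zero]
    _ = ENNReal.ofReal (exp (-t ^ 2 / 2) / 2) := by
        rw [ENNReal.ofReal_div_of_pos two_pos, ENNReal.ofReal_ofNat, ENNReal.div_eq_inv_mul,
          mul_comm]

theorem gaussianReal_Ioi_le_half_sub {t : ℝ} (ht : t ≤ 0) :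
    gaussianReal 0 1 (Ioi t) ≤ ENNReal.ofReal (1 / 2 - t / √(2 * π)) := by
  calc gaussianReal 0 1 (Ioi t)
      ≤ gaussianReal 0 1 (Ioc t 0) + gaussianReal 0 1 (Ioi 0) := by
        rw [← measure_union (Ioc_disjoint_Ioi le_rfl) measurableSet_Ioi, Ioc_union_Ioi_eq_Ioi ht]
    _ ≤ ENNReal.ofReal (√(2 * π))⁻¹ * ENNReal.ofReal (-t) + 2⁻¹ := by
        gcongr
        · simpa using gaussianReal_le_ofReal_mul_volume 0 one_ne_zero (Ioc t 0)
        · exact (gaussianReal_Ioi_self 0 one_ne_zero).le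
    _ = ENNReal.ofReal (1 / 2 - t / √(2 * π)) := by
        rw [← ENNReal.ofReal_mul (by positivity), ← ENNReal.ofReal_ofNat 2,
          ← ENNReal.ofReal_inv_of_pos two_pos,
          ← ENNReal.ofReal_add (mul_nonneg (by positivity) (neg_nonneg.2 ht)) (by norm_num)]
        congr 1
        ring

theorem gaussianReal_Ioi_sub_le_of_le {a c δ : ℝ} (hac : 2 * a * c < 1)
    (hδ : δ = 1.25 * exp (-c ^ 2 / 2)) (hle : a ≤ c) :
    gaussianReal 0 1 (Ioi (c - a)) ≤ ENNReal.ofReal δ := by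
  refine (gaussianReal_Ioi_le_exp_neg_sq (sub_nonneg.2 hle)).trans (ENNReal.ofReal_le_ofReal ?_)
  have hexp_half : exp (1 / 2) ≤ 5 / 2 := by
    have : exp (1 / 2) ^ 2 = exp 1 := by rw [← exp_nat_mul]; norm_num
    nlinarith [exp_one_lt_d9, exp_pos (1 / 2)]
  have hsq : exp (-(c - a) ^ 2 / 2) ≤ exp (1 / 2) * exp (-c ^ 2 / 2) := by
    rw [← exp_add]
    exact exp_le_exp.2 (by nlinarith [sq_nonneg a])
  rw [hδ]
  nlinarith [exp_pos (-c ^ 2 / 2)]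

theorem gaussianReal_Ioi_sub_le_of_lt {a c δ : ℝ} (hc : 2 / 5 ≤ c ^ 2) (hc0 : 0 < c)
    (hac : 2 * a * c < 1) (hδ : δ = 1.25 * exp (-c ^ 2 / 2)) (hlt : c < a) :
    gaussianReal 0 1 (Ioi (c - a)) ≤ ENNReal.ofReal δ := by
  refine (gaussianReal_Ioi_le_half_sub (by linarith)).trans (ENNReal.ofReal_le_ofReal ?_)
  have hsqrt : 2 ≤ √(2 * π) :=
    (le_sqrt zero_le_two (by positivity)).2 (by nlinarith [pi_gt_three])
  have htail : -(c - a) / √(2 * π) ≤ a / 2 := by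
    rw [div_le_div_iff₀ (by positivity) two_pos]
    nlinarith
  have hδ_lower : 15 / 16 ≤ δ := by
    have := add_one_le_exp (-c ^ 2 / 2)
    rw [hδ]
    nlinarith
  have ha : a ≤ 7 / 8 := by nlinarith
  linarith [neg_div (√(2 * π)) (c - a)]

theorem gaussianReal_Ioi_le_of_eq_sqrt_log {σ₀ δ ε : ℝ} (hσ₀ : 0 < σ₀) (hδ : δ ∈ Ioo 0 1)
    (hε : ε = 1 / σ₀ * √(2 * log (1.25 / δ))) (hε1 : ε < 1) :
    gaussianReal 0 1 (Ioi (σ₀ * ε - 1 / (2 * σ₀))) ≤ ENNReal.ofReal δ := by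
  obtain ⟨hδ0, hδ1⟩ := hδ
  set c := √(2 * log (1.25 / δ))
  have hlog : log 1.25 < log (1.25 / δ) :=
    log_lt_log (by norm_num) (by rw [lt_div_iff₀ hδ0]; linarith)
  have hlog_lower : 1 / 5 ≤ log 1.25 := by
    have := one_sub_inv_le_log_of_pos (show (0 : ℝ) < 1.25 by norm_num)
    norm_num at this ⊢
    linarith
  have hc2 : c ^ 2 = 2 * log (1.25 / δ) := sq_sqrt (by linarith)
  have hc0 : 0 < c := sqrt_pos.2 (by linarith)
  have hδc : δ = 1.25 * exp (-c ^ 2 / 2) := by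
    rw [hc2, show -(2 * log (1.25 / δ)) / 2 = -log (1.25 / δ) by ring, exp_neg,
      exp_log (by positivity)]
    field_simp
  have hσ₀ε : σ₀ * ε = c := by rw [hε]; field_simp
  have hac : 2 * (1 / (2 * σ₀)) * c < 1 := by
    rwa [← hσ₀ε, show 2 * (1 / (2 * σ₀)) * (σ₀ * ε) = ε by field_simp]
  rw [hσ₀ε]
  rcases le_or_gt (1 / (2 * σ₀)) c with hle | hlt
  · exact gaussianReal_Ioi_sub_le_of_le hac hδc hle
  · exact gaussianReal_Ioi_sub_le_of_lt (by linarith) hc0 hac hδc hlt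

/-- **One-dimensional Gaussian mechanism (core of Proposition 1).**
If `|μ - μ'| ≤ Δ` and the noise has variance `σ₀² Δ²`, then for every measurable set `A`,
`gaussianReal μ σ² A ≤ e^ε · gaussianReal μ' σ² A + δ` with
`ε = (1/σ₀)·√(2 ln(1.25/δ))`. -/
theorem gaussian_mechanism_one_dim_dp
    (Δ σ₀ : ℝ) (hΔ : 0 < Δ) (hσ₀ : 0 < σ₀)
    (δ : ℝ) (hδ : δ ∈ Set.Ioo (0 : ℝ) 1)
    (ε : ℝ) (hε : ε = (1 / σ₀) * Real.sqrt (2 * Real.log (1.25 / δ)))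
    (hε1 : ε < 1)
    (μ μ' : ℝ) (hsens : |μ - μ'| ≤ Δ) :
    ∀ A : Set ℝ, MeasurableSet A →
      gaussianReal μ (Real.toNNReal (σ₀ ^ 2 * Δ ^ 2)) A ≤
        ENNReal.ofReal (Real.exp ε) * gaussianReal μ' (Real.toNNReal (σ₀ ^ 2 * Δ ^ 2)) A +
          ENNReal.ofReal δ := by
  intro A _
  set v := Real.toNNReal (σ₀ ^ 2 * Δ ^ 2)
  have hv : v ≠ 0 := (Real.toNNReal_pos.2 (by positivity)).ne'
  have hsqrt : √(v : ℝ) = σ₀ * Δ := by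
    rw [Real.coe_toNNReal _ (by positivity), ← mul_pow, sqrt_sq (by positivity)]
  have hε0 : 0 ≤ ε := hε ▸ by positivity
  calc gaussianReal μ v A
      ≤ ENNReal.ofReal (exp ε) * gaussianReal μ' v A +
          gaussianReal μ v
            {x | ENNReal.ofReal (exp ε) * gaussianPDF μ' v x < gaussianPDF μ v x} := by
        simpa only [gaussianReal_of_var_ne_zero _ hv] using
          withDensity_apply_le_mul_add (measurable_gaussianPDF μ' v) _ A
    _ ≤ ENNReal.ofReal (exp ε) * gaussianReal μ' v A +
          gaussianReal 0 1 (Ioi (√v * ε / Δ - Δ / (2 * √v))) := by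
        gcongr _ + ?_
        exact gaussianReal_setOf_exp_mul_gaussianPDF_lt_le hv hε0 hsens
    _ = ENNReal.ofReal (exp ε) * gaussianReal μ' v A +
          gaussianReal 0 1 (Ioi (σ₀ * ε - 1 / (2 * σ₀))) := by
        rw [hsqrt, show σ₀ * Δ * ε / Δ - Δ / (2 * (σ₀ * Δ)) = σ₀ * ε - 1 / (2 * σ₀) by
          field_simp]
    _ ≤ ENNReal.ofReal (exp ε) * gaussianReal μ' v A + ENNReal.ofReal δ := by
        gcongr _ + ?_
        exact gaussianReal_Ioi_le_of_eq_sqrt_log hσ₀ hδ hε hε1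
end

section
/- Let μ, μ' ∈ ℝ with Δ = |μ − μ'| > 0, let σ₀ > 0 and σ² = σ₀²·Δ², let ε ∈ (0,1) and δ ∈ (0,1), and assume σ₀ ≥ √(2·ln(1.25/δ))/ε. Define the privacy-loss function L(x) = ((x − μ')² − (x − μ)²)/(2σ²), which is the logarithm of the density ratio of gaussianReal(μ, σ²) to gaussianReal(μ', σ²). Then gaussianReal(μ, σ²)({x : L(x) > ε}) ≤ δ. -/
/-! The privacy loss is an increasing affine function of the standardized variable
`Z = (x - μ) / (σ₀ (μ - μ'))`, which is standard normal, and it exceeds `ε` iff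
`Z > s := σ₀ ε - 1 / (2 σ₀)`. If `s ≥ 0`, comparing the density of `Z` with the one centred at `s`
gives `P(Z > s) ≤ exp (-s² / 2) / 2`, and `s² ≥ 2 log (1.25 / δ) - ε` turns this into `δ`.
If `s < 0`, the hypotheses force `log (1.25 / δ) < 1 / 4`, so `δ > 15 / 16`, while the density is at
most `1 / √(2π)` on `(s, 0]` with `-s < 7 / 8`, so `P(Z > s) ≤ 1 / 2 + 7 / 16`. -/

open MeasureTheory ProbabilityTheory Real Set
open scoped NNReal

namespace ProbabilityTheory

lemma measureReal_gaussianReal_eq_integral (μ : ℝ) {v : ℝ≥0} (hv : v ≠ 0) (s : Set ℝ) :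
    (gaussianReal μ v).real s = ∫ x in s, gaussianPDFReal μ v x := by
  rw [measureReal_def, gaussianReal_apply_eq_integral μ hv,
    ENNReal.toReal_ofReal (setIntegral_nonneg_of_ae (ae_of_all _ (gaussianPDFReal_nonneg μ v)))]

lemma measureReal_gaussianReal_Ioi_self (μ : ℝ) {v : ℝ≥0} (hv : v ≠ 0) :
    (gaussianReal μ v).real (Ioi μ) = 1 / 2 := by
  have := nullSingletonClass_gaussianReal (μ := μ) hv
  have h_symm : (gaussianReal μ v).real (Iio μ) = (gaussianReal μ v).real (Ioi μ) := by
    have h := gaussianReal_map_const_sub (μ := μ) (v := v) (2 * μ)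
    rw [show 2 * μ - μ = μ by ring] at h
    conv_rhs => rw [← h]
    rw [map_measureReal_apply (by fun_prop) measurableSet_Ioi]
    congr 1
    ext x
    simp only [mem_Iio, mem_preimage, mem_Ioi]
    constructor <;> intro <;> linarith
  have h_union : (gaussianReal μ v).real (Iio μ) + (gaussianReal μ v).real (Ioi μ) = 1 := by
    rw [← measureReal_union ((Iic_disjoint_Ioi le_rfl).mono_left Iio_subset_Iic_self)
      measurableSet_Ioi, Iio_union_Ioi, measureReal_compl (measurableSet_singleton μ)]
    simp [measureReal_def]
  linarith

lemma gaussianPDFReal_le (μ : ℝ) (v : ℝ≥0) (x : ℝ) :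
    gaussianPDFReal μ v x ≤ (√(2 * π * v))⁻¹ := by
  rw [gaussianPDFReal]
  refine mul_le_of_le_one_right (by positivity) (exp_le_one_iff.2 ?_)
  exact div_nonpos_of_nonpos_of_nonneg (neg_nonpos.2 (sq_nonneg _)) (by positivity)

lemma measureReal_gaussianReal_Ioc_le (μ : ℝ) {v : ℝ≥0} (hv : v ≠ 0) {a b : ℝ} (hab : a ≤ b) :
    (gaussianReal μ v).real (Ioc a b) ≤ (b - a) / √(2 * π * v) := by
  rw [measureReal_gaussianReal_eq_integral μ hv]
  calc ∫ x in Ioc a b, gaussianPDFReal μ v x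
      ≤ ∫ _ in Ioc a b, (√(2 * π * v))⁻¹ :=
        setIntegral_mono_on (integrable_gaussianPDFReal μ v).integrableOn
          (integrableOn_const (by simp)) measurableSet_Ioc
          (fun x _ ↦ gaussianPDFReal_le μ v x)
    _ = (b - a) / √(2 * π * v) := by
        rw [setIntegral_const, Real.volume_real_Ioc_of_le hab, smul_eq_mul, div_eq_mul_inv]

lemma gaussianPDFReal_zero_one_eq_exp_mul (s x : ℝ) :
    gaussianPDFReal 0 1 x = exp (-(s * (x - s)) - s ^ 2 / 2) * gaussianPDFReal s 1 x := by
  simp only [gaussianPDFReal, NNReal.coe_one, mul_one, sub_zero]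
  rw [mul_left_comm, ← exp_add]
  ring_nf

lemma measureReal_gaussianReal_Ioi_le_exp {s : ℝ} (hs : 0 ≤ s) :
    (gaussianReal 0 1).real (Ioi s) ≤ exp (-s ^ 2 / 2) / 2 := by
  have h_dom : ∀ x ∈ Ioi s,
      gaussianPDFReal 0 1 x ≤ exp (-s ^ 2 / 2) * gaussianPDFReal s 1 x := by
    intro x hx
    rw [gaussianPDFReal_zero_one_eq_exp_mul s x]
    gcongr
    · exact gaussianPDFReal_nonneg s 1 x
    · nlinarith [mul_nonneg hs (sub_nonneg.2 (le_of_lt hx))]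
  calc (gaussianReal 0 1).real (Ioi s) = ∫ x in Ioi s, gaussianPDFReal 0 1 x :=
        measureReal_gaussianReal_eq_integral 0 one_ne_zero _
    _ ≤ ∫ x in Ioi s, exp (-s ^ 2 / 2) * gaussianPDFReal s 1 x :=
        setIntegral_mono_on (integrable_gaussianPDFReal 0 1).integrableOn
          ((integrable_gaussianPDFReal s 1).const_mul _).integrableOn measurableSet_Ioi h_dom
    _ = exp (-s ^ 2 / 2) * (gaussianReal s 1).real (Ioi s) := by
        rw [integral_const_mul, measureReal_gaussianReal_eq_integral s one_ne_zero]
    _ = exp (-s ^ 2 / 2) / 2 := by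
        rw [measureReal_gaussianReal_Ioi_self s one_ne_zero]
        ring

lemma measureReal_gaussianReal_Ioi_le_of_nonpos {s : ℝ} (hs : s ≤ 0) :
    (gaussianReal 0 1).real (Ioi s) ≤ 1 / 2 + -s / √(2 * π) := by
  have h_Ioc := measureReal_gaussianReal_Ioc_le 0 one_ne_zero hs
  rw [NNReal.coe_one, mul_one, zero_sub] at h_Ioc
  rw [← Ioc_union_Ioi_eq_Ioi hs, measureReal_union (Ioc_disjoint_Ioi le_rfl) measurableSet_Ioi,
    measureReal_gaussianReal_Ioi_self 0 one_ne_zero]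
  linarith

lemma gaussianReal_map_mul_sub_self {μ c : ℝ} {v : ℝ≥0} (h : c ^ 2 * v = 1) :
    (gaussianReal μ v).map (fun x ↦ c * (x - μ)) = gaussianReal 0 1 := by
  have h_comp : (fun x ↦ c * (x - μ)) = (c * ·) ∘ (· - μ) := rfl
  rw [h_comp, ← Measure.map_map (by fun_prop) (by fun_prop), gaussianReal_map_sub_const,
    gaussianReal_map_const_mul, sub_self, mul_zero]
  congr
  ext
  simpa using h

lemma setOf_privacyLoss_gt_eq_preimage {μ μ' σ₀ ε : ℝ} (hμ : μ ≠ μ') (hσ₀ : 0 < σ₀) :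
    {x | ((x - μ') ^ 2 - (x - μ) ^ 2) / (2 * (σ₀ ^ 2 * (μ - μ') ^ 2)) > ε}
      = (fun x ↦ (σ₀ * (μ - μ'))⁻¹ * (x - μ)) ⁻¹' Ioi (σ₀ * ε - 1 / (2 * σ₀)) := by
  ext x
  have h_loss : ((x - μ') ^ 2 - (x - μ) ^ 2) / (2 * (σ₀ ^ 2 * (μ - μ') ^ 2))
      = ((σ₀ * (μ - μ'))⁻¹ * (x - μ) + 1 / (2 * σ₀)) / σ₀ := by
    field_simp [sub_ne_zero.2 hμ]
    ring
  rw [mem_ofPred_eq, h_loss, gt_iff_lt, lt_div_iff₀ hσ₀, mem_preimage, mem_Ioi]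
  constructor <;> intro <;> linarith

section Threshold

variable {σ₀ ε δ : ℝ}

lemma exp_neg_log_div_eq (hδ : 0 < δ) : exp (-log (1.25 / δ)) = 4 / 5 * δ := by
  rw [exp_neg, exp_log (by positivity), inv_div]
  norm_num
  ring

lemma measureReal_gaussianReal_Ioi_threshold_le_of_nonneg (hσ₀ : σ₀ ≠ 0) (hε : ε ≤ 1)
    (hδ : 0 < δ) (h_log : 2 * log (1.25 / δ) ≤ (σ₀ * ε) ^ 2)
    (hs : 0 ≤ σ₀ * ε - 1 / (2 * σ₀)) :
    (gaussianReal 0 1).real (Ioi (σ₀ * ε - 1 / (2 * σ₀))) ≤ δ := by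
  set s := σ₀ * ε - 1 / (2 * σ₀) with hs_def
  set L := log (1.25 / δ)
  have h_sq : 2 * L - ε ≤ s ^ 2 := by
    have h_expand : s ^ 2 = (σ₀ * ε) ^ 2 - ε + (1 / (2 * σ₀)) ^ 2 := by
      rw [hs_def]
      field_simp
      ring
    nlinarith [sq_nonneg (1 / (2 * σ₀))]
  have h_exp_half : exp (1 / 2) ≤ 2 :=
    (exp_bound_div_one_sub_of_interval (by norm_num) (by norm_num)).trans_eq (by norm_num)
  calc (gaussianReal 0 1).real (Ioi s) ≤ exp (-s ^ 2 / 2) / 2 :=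
        measureReal_gaussianReal_Ioi_le_exp hs
    _ ≤ exp (1 / 2 + -L) / 2 := by gcongr; linarith
    _ ≤ δ := by
        rw [exp_add, exp_neg_log_div_eq hδ]
        nlinarith [mul_le_mul_of_nonneg_right h_exp_half (by positivity : 0 ≤ 4 / 5 * δ)]

lemma measureReal_gaussianReal_Ioi_threshold_le_of_neg (hσ₀ : 0 < σ₀)
    (hε : ε ∈ Ioo (0 : ℝ) 1) (hδ : δ ∈ Ioo (0 : ℝ) 1)
    (h_log : 2 * log (1.25 / δ) ≤ (σ₀ * ε) ^ 2) (hs : σ₀ * ε - 1 / (2 * σ₀) < 0) :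
    (gaussianReal 0 1).real (Ioi (σ₀ * ε - 1 / (2 * σ₀))) ≤ δ := by
  obtain ⟨hε0, hε1⟩ := hε
  obtain ⟨hδ0, hδ1⟩ := hδ
  set s := σ₀ * ε - 1 / (2 * σ₀)
  set L := log (1.25 / δ)
  have h_exp_L : exp (-L) = 4 / 5 * δ := exp_neg_log_div_eq hδ0
  have hL_gt : 1 / 5 < L := by linarith [add_one_le_exp (-L)]
  have h_small : σ₀ ^ 2 * ε < 1 / 2 := by
    have : σ₀ * ε < 1 / (2 * σ₀) := by linarith
    rw [lt_div_iff₀ (by positivity)] at this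
    linarith
  have hL_lt : L < 1 / 4 := by nlinarith
  have hδ_gt : 15 / 16 < δ := by linarith [add_one_le_exp (-L)]
  have hσ₀_sq : 2 / 5 < σ₀ ^ 2 := by
    have : (σ₀ * ε) ^ 2 < σ₀ ^ 2 := by
      rw [mul_pow]
      exact mul_lt_of_lt_one_right (by positivity) (pow_lt_one₀ hε0.le hε1 two_ne_zero)
    linarith
  have hs_gt : -(7 / 8) < s := by
    have : 1 / (2 * σ₀) < 7 / 8 := by
      rw [div_lt_iff₀ (by positivity)]
      nlinarith
    linarith [mul_pos hσ₀ hε0]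
  have h_sqrt : 2 ≤ √(2 * π) := by
    rw [le_sqrt (by norm_num) (by positivity)]
    linarith [pi_gt_three]
  calc (gaussianReal 0 1).real (Ioi s) ≤ 1 / 2 + -s / √(2 * π) :=
        measureReal_gaussianReal_Ioi_le_of_nonpos hs.le
    _ ≤ 1 / 2 + 7 / 8 / 2 := by gcongr; linarith
    _ ≤ δ := by linarith

lemma measureReal_gaussianReal_Ioi_threshold_le (hσ₀ : 0 < σ₀)
    (hε : ε ∈ Ioo (0 : ℝ) 1) (hδ : δ ∈ Ioo (0 : ℝ) 1)
    (h : √(2 * log (1.25 / δ)) / ε ≤ σ₀) :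
    (gaussianReal 0 1).real (Ioi (σ₀ * ε - 1 / (2 * σ₀))) ≤ δ := by
  have h_log_pos : 0 < log (1.25 / δ) := log_pos (by rw [lt_div_iff₀ hδ.1]; linarith [hδ.2])
  have h_log : 2 * log (1.25 / δ) ≤ (σ₀ * ε) ^ 2 :=
    calc 2 * log (1.25 / δ) = √(2 * log (1.25 / δ)) ^ 2 := (sq_sqrt (by positivity)).symm
      _ ≤ (σ₀ * ε) ^ 2 := pow_le_pow_left₀ (sqrt_nonneg _) ((div_le_iff₀ hε.1).1 h) 2
  rcases le_or_gt 0 (σ₀ * ε - 1 / (2 * σ₀)) with hs | hs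
  · exact measureReal_gaussianReal_Ioi_threshold_le_of_nonneg hσ₀.ne' hε.2.le hδ.1 h_log hs
  · exact measureReal_gaussianReal_Ioi_threshold_le_of_neg hσ₀ hε hδ h_log hs

end Threshold

end ProbabilityTheory

/-- **Privacy-loss tail bound for the Gaussian mechanism (Dwork–Roth Theorem A.1 core).**
With `Δ = |μ − μ'| > 0`, variance `σ² = σ₀²·Δ²`, `ε, δ ∈ (0,1)`, and
`σ₀ ≥ √(2·ln(1.25/δ))/ε`, the privacy-loss function
`L(x) = ((x − μ')² − (x − μ)²)/(2σ²)` satisfies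
`gaussianReal μ σ² {x : L x > ε} ≤ δ`. -/
theorem gaussian_privacy_loss_tail
    (μ μ' : ℝ) (Δ : ℝ) (hΔdef : Δ = |μ - μ'|) (hΔ : 0 < Δ)
    (σ₀ : ℝ) (hσ₀ : 0 < σ₀)
    (σ2 : ℝ) (hσ2 : σ2 = σ₀ ^ 2 * Δ ^ 2)
    (ε : ℝ) (hε : ε ∈ Set.Ioo (0 : ℝ) 1)
    (δ : ℝ) (hδ : δ ∈ Set.Ioo (0 : ℝ) 1)
    (hσ₀big : σ₀ ≥ Real.sqrt (2 * Real.log (1.25 / δ)) / ε) :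
    gaussianReal μ (Real.toNNReal σ2)
        {x | ((x - μ') ^ 2 - (x - μ) ^ 2) / (2 * σ2) > ε} ≤ ENNReal.ofReal δ := by
  subst hΔdef hσ2
  have hμ : μ ≠ μ' := sub_ne_zero.1 (abs_pos.1 hΔ)
  have h_std : (σ₀ * (μ - μ'))⁻¹ ^ 2 * (σ₀ ^ 2 * (μ - μ') ^ 2).toNNReal = (1 : ℝ) := by
    rw [Real.coe_toNNReal _ (by positivity)]
    field_simp [sub_ne_zero.2 hμ]
  rw [sq_abs, setOf_privacyLoss_gt_eq_preimage hμ hσ₀,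
    ← Measure.map_apply (by fun_prop) measurableSet_Ioi, gaussianReal_map_mul_sub_self h_std,
    ← ofReal_measureReal]
  exact ENNReal.ofReal_le_ofReal (measureReal_gaussianReal_Ioi_threshold_le hσ₀ hε hδ hσ₀big)
end
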